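/- Let L be a finite Galois extension of a field K with Galois group G, let H and H' be subgroups of G, and set E = L^{H'} and F = L^{H} (the fixed fields). Choose a complete set of representatives σ_1, …, σ_m ∈ G for the double cosets H'\G/H. Then the K-algebra homomorphism E ⊗_K F → ∏_{i=1}^m (E · σ_i(F)), given on pure tensors by x ⊗ y ↦ (x · σ_i(y))_{i=1,…,m}, where E · σ_i(F) denotes the compositum of E and σ_i(F) inside L, is an isomorphism of K-algebras. Moreover E · σ_i(F) equals the fixed field L^{H' ∩ σ_i H σ_i^{-1}}. -/

import Mathlib

/-!
Each component `x ⊗ y ↦ x σᵢ(y)` maps onto the field `E·σᵢ(F)`, whose fixing group is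
`H' ∩ σᵢHσᵢ⁻¹`. If two components have the same kernel, the induced isomorphism between their
images extends to an automorphism `τ` of `L` with `τ = id` on `E` and `τσᵢ = σⱼ` on `F`, so
`σⱼ ∈ H'σᵢH`. Hence the kernels are distinct maximal ideals and the product map is onto by the
Chinese remainder theorem. It is injective by counting dimensions: the orbits of `H'` on `G/H` are
the double cosets and the stabilizer of `σH` is `H' ∩ σHσ⁻¹`, so
`[G : H] = ∑ᵢ [H' : H' ∩ σᵢHσᵢ⁻¹]`; multiplied by `[G : H']` this reads
`[E : K] [F : K] = ∑ᵢ [E·σᵢ(F) : K]`.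
-/

open TensorProduct IntermediateField MulAction

namespace Subgroup

variable {G : Type*} [Group G] (H H' : Subgroup G)

theorem stabilizer_coe_eq_map_conj_subgroupOf (g : G) :
    stabilizer H' (g : G ⧸ H) = (H.map (MulAut.conj g).toMonoidHom).subgroupOf H' := by
  have hg : stabilizer G (g : G ⧸ H) = H.map (MulAut.conj g).toMonoidHom := by
    conv_lhs => rw [← mul_one g, ← smul_eq_mul, ← MulAction.Quotient.smul_coe]
    rw [stabilizer_smul_eq_stabilizer_map_conj, stabilizer_quotient]
  ext h
  rw [mem_subgroupOf, ← hg]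
  rfl

theorem orbitRel_coe_iff_doubleCoset_mk_eq (a b : G) :
    orbitRel H' (G ⧸ H) a b ↔ DoubleCoset.mk H' H a = DoubleCoset.mk H' H b := by
  rw [orbitRel_apply, DoubleCoset.eq]
  constructor
  · rintro ⟨⟨h, hh⟩, hab⟩
    have hk : (h * b)⁻¹ * a ∈ H := QuotientGroup.eq.mp hab
    exact ⟨h⁻¹, inv_mem hh, ((h * b)⁻¹ * a)⁻¹, inv_mem hk, by group⟩
  · rintro ⟨h, hh, k, hk, rfl⟩
    refine ⟨⟨h⁻¹, inv_mem hh⟩, QuotientGroup.eq.mpr ?_⟩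
    simpa [mul_assoc] using hk

theorem index_eq_sum_relIndex_map_conj [H.FiniteIndex] {ι : Type*} [Fintype ι] (σ : ι → G)
    (hσ : Function.Bijective fun i => DoubleCoset.mk H' H (σ i)) :
    H.index = ∑ i, (H.map (MulAut.conj (σ i)).toMonoidHom).relIndex H' := by
  have hrep : Function.Bijective fun i => (⟦(σ i : G ⧸ H)⟧ : orbitRel.Quotient H' (G ⧸ H)) := by
    refine ⟨fun i j hij => hσ.injective ?_, fun ω => ?_⟩
    · exact (orbitRel_coe_iff_doubleCoset_mk_eq H H' _ _).mp (Quotient.exact hij)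
    · obtain ⟨x, rfl⟩ := Quotient.exists_rep ω
      obtain ⟨g, rfl⟩ := QuotientGroup.mk_surjective x
      obtain ⟨i, hi⟩ := hσ.surjective (DoubleCoset.mk H' H g)
      exact ⟨i, Quotient.sound ((orbitRel_coe_iff_doubleCoset_mk_eq H H' _ _).mpr hi)⟩
  calc H.index = Nat.card (Σ ω : orbitRel.Quotient H' (G ⧸ H), ω.orbit) :=
        Nat.card_congr (selfEquivSigmaOrbits' H' (G ⧸ H))
    _ = Nat.card (Σ i, orbit H' (σ i : G ⧸ H)) :=
        Nat.card_congr (Equiv.sigmaCongr (Equiv.ofBijective _ hrep)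
          fun i => Equiv.setCongr (orbitRel.Quotient.orbit_mk _)).symm
    _ = ∑ i, (H.map (MulAut.conj (σ i)).toMonoidHom).relIndex H' := by
        rw [Nat.card_sigma]
        refine Finset.sum_congr rfl fun i _ => ?_
        rw [relIndex, ← stabilizer_coe_eq_map_conj_subgroupOf, index_stabilizer,
          Nat.card_coe_set_eq]

end Subgroup

theorem AlgHom.pi_surjective_of_injective_ker {R A : Type*} [CommSemiring R] [CommRing A]
    [Algebra R A] {ι : Type*} [_root_.Finite ι] {B : ι → Type*} [∀ i, Field (B i)]
    [∀ i, Algebra R (B i)] (g : ∀ i, A →ₐ[R] B i) (hg : ∀ i, Function.Surjective (g i))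
    (hker : Function.Injective fun i => RingHom.ker (g i)) :
    Function.Surjective (AlgHom.pi g) := by
  have hcoprime : Pairwise (Function.onFun IsCoprime fun i => RingHom.ker (g i)) :=
    fun i j hij => Ideal.isCoprime_iff_sup_eq.mpr <|
      (RingHom.ker_isMaximal_of_surjective _ (hg i)).coprime_of_ne
        (RingHom.ker_isMaximal_of_surjective _ (hg j)) (hker.ne hij)
  intro z
  choose a ha using fun i => hg i (z i)
  obtain ⟨r, hr⟩ := Ideal.exists_forall_sub_mem_ideal hcoprime a
  refine ⟨r, funext fun i => ?_⟩
  rw [AlgHom.pi_apply, ← ha i, ← sub_eq_zero, ← map_sub]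
  exact hr i

section Galois

variable {K L : Type*} [Field K] [Field L] [Algebra K L]

theorem exists_algEquiv_apply_eq_of_ker_le [Normal K L] {A : Type*} [Ring A] [Algebra K A]
    {M₁ M₂ : IntermediateField K L} (g₁ : A →ₐ[K] M₁) (g₂ : A →ₐ[K] M₂)
    (hg₁ : Function.Surjective g₁) (hker : RingHom.ker g₁ ≤ RingHom.ker g₂) :
    ∃ τ : L ≃ₐ[K] L, ∀ a, τ (g₁ a) = g₂ a := by
  let φ : M₁ →ₐ[K] M₂ := (Ideal.Quotient.liftₐ _ g₂ fun a ha => hker ha).comp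
    (Ideal.quotientKerAlgEquivOfSurjective hg₁).symm.toAlgHom
  have hφ (a : A) : φ (g₁ a) = g₂ a := by
    have : (Ideal.quotientKerAlgEquivOfSurjective hg₁).symm (g₁ a) = Ideal.Quotient.mk _ a :=
      (AlgEquiv.symm_apply_eq _).mpr rfl
    simp only [φ, AlgHom.comp_apply, AlgEquiv.coe_toAlgHom, this]
    rfl
  refine ⟨AlgEquiv.ofBijective (φ.liftNormal L) (AlgHom.normal_bijective K L L _), fun a => ?_⟩
  simpa [hφ] using φ.liftNormal_commutes L (g₁ a)

theorem fixedField_sup_map_fixedField [FiniteDimensional K L] [IsGalois K L]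
    (H H' : Subgroup (L ≃ₐ[K] L)) (σ : L ≃ₐ[K] L) :
    fixedField H' ⊔ (fixedField H).map σ.toAlgHom =
      fixedField (H' ⊓ H.map (MulAut.conj σ).toMonoidHom) := by
  rw [← IsGalois.fixedField_fixingSubgroup (fixedField H' ⊔ _), fixingSubgroup_sup,
    IsGalois.map_fixingSubgroup, fixingSubgroup_fixedField, fixingSubgroup_fixedField]
  rfl

theorem finrank_fixedField_eq_index [FiniteDimensional K L] [IsGalois K L]
    (H : Subgroup (L ≃ₐ[K] L)) : Module.finrank K (fixedField H) = H.index := by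
  rw [finrank_eq_fixingSubgroup_index, fixingSubgroup_fixedField]

noncomputable def compositumMap (E F : IntermediateField K L) (σ : L ≃ₐ[K] L) :
    E ⊗[K] F →ₐ[K] ↥(E ⊔ F.map σ.toAlgHom) :=
  Algebra.TensorProduct.productMap (inclusion le_sup_left)
    ((inclusion le_sup_right).comp (F.equivMap σ.toAlgHom).toAlgHom)

theorem compositumMap_tmul (E F : IntermediateField K L) (σ : L ≃ₐ[K] L) (x : E) (y : F) :
    (compositumMap E F σ (x ⊗ₜ y) : L) = x * σ y := rfl

theorem compositumMap_surjective [FiniteDimensional K L] (E F : IntermediateField K L)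
    (σ : L ≃ₐ[K] L) : Function.Surjective (compositumMap E F σ) := by
  have hrange : ((E ⊔ F.map σ.toAlgHom).val.comp (compositumMap E F σ)).range =
      (E ⊔ F.map σ.toAlgHom).toSubalgebra := by
    rw [sup_toSubalgebra_of_left, AlgHom.range_comp, compositumMap,
      Algebra.TensorProduct.productMap_range, Algebra.map_sup, ← AlgHom.range_comp,
      ← AlgHom.range_comp]
    congr 1 <;> ext x <;> simp [AlgHom.mem_range]
  intro c
  obtain ⟨a, ha⟩ : (c : L) ∈ ((E ⊔ F.map σ.toAlgHom).val.comp (compositumMap E F σ)).range :=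
    hrange ▸ c.2
  exact ⟨a, Subtype.ext ha⟩

theorem doubleCoset_mk_eq_of_ker_compositumMap_le [FiniteDimensional K L] [IsGalois K L]
    (H H' : Subgroup (L ≃ₐ[K] L)) {σ₁ σ₂ : L ≃ₐ[K] L}
    (hker : RingHom.ker (compositumMap (fixedField H') (fixedField H) σ₁) ≤
      RingHom.ker (compositumMap (fixedField H') (fixedField H) σ₂)) :
    DoubleCoset.mk H' H σ₁ = DoubleCoset.mk H' H σ₂ := by
  have hlift := exists_algEquiv_apply_eq_of_ker_le (A := fixedField H' ⊗[K] fixedField H)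
    (compositumMap _ _ σ₁) (compositumMap _ _ σ₂) (compositumMap_surjective _ _ σ₁)
  obtain ⟨τ, hτ⟩ := hlift hker
  have hτH' : τ ∈ H' := by
    rw [← fixingSubgroup_fixedField H', IntermediateField.mem_fixingSubgroup_iff]
    intro x hx
    simpa [compositumMap_tmul] using hτ (⟨x, hx⟩ ⊗ₜ 1)
  have hH : σ₂⁻¹ * τ * σ₁ ∈ H := by
    rw [← fixingSubgroup_fixedField H, IntermediateField.mem_fixingSubgroup_iff]
    intro y hy
    have hy' := hτ (1 ⊗ₜ ⟨y, hy⟩)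
    simp only [compositumMap_tmul, OneMemClass.coe_one, one_mul] at hy'
    rw [AlgEquiv.mul_apply, AlgEquiv.mul_apply, hy']
    exact σ₂.symm_apply_apply y
  rw [DoubleCoset.eq]
  exact ⟨τ, hτH', (σ₂⁻¹ * τ * σ₁)⁻¹, inv_mem hH, by group⟩

end Galois

/-- Let `L/K` be a finite Galois extension with Galois group `G`, let `H, H'` be
subgroups of `G`, and set `E = L^{H'}`, `F = L^{H}`. If `σ 0, …, σ (m-1)` is a complete
set of representatives for the double cosets `H'\G/H`, then the `K`-algebra homomorphism
`E ⊗[K] F → ∏ i, E·(σ i)(F)`, `x ⊗ y ↦ (x * σ i y)_i`, into the product of the composita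
`E·(σ i)(F) ⊆ L`, is an isomorphism of `K`-algebras. Moreover `E·(σ i)(F)` equals the
fixed field `L^{H' ∩ σ i H (σ i)⁻¹}`. -/
theorem stmt_3 (K L : Type*) [Field K] [Field L] [Algebra K L]
    [FiniteDimensional K L] [IsGalois K L]
    (H H' : Subgroup (L ≃ₐ[K] L))
    (E F : IntermediateField K L)
    (hE : E = IntermediateField.fixedField H') (hF : F = IntermediateField.fixedField H)
    (m : ℕ) (σ : Fin m → (L ≃ₐ[K] L))
    (hσ : Function.Bijective fun i => DoubleCoset.mk H' H (σ i)) :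
    (∃ f : (E ⊗[K] F) →ₐ[K] (∀ i : Fin m, (E ⊔ F.map (σ i).toAlgHom : IntermediateField K L)),
      (∀ (x : E) (y : F) (i : Fin m), (f (x ⊗ₜ[K] y) i : L) = (x : L) * σ i (y : L)) ∧
      Function.Bijective f) ∧
    ∀ i : Fin m,
      (E ⊔ F.map (σ i).toAlgHom : IntermediateField K L) =
        IntermediateField.fixedField (H' ⊓ H.map (MulAut.conj (σ i)).toMonoidHom) := by
  subst hE hF
  have hcompositum (i : Fin m) := fixedField_sup_map_fixedField H H' (σ i)
  have hker : Function.Injective fun i =>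
      RingHom.ker (compositumMap (fixedField H') (fixedField H) (σ i)) :=
    fun i j hij => hσ.injective (doubleCoset_mk_eq_of_ker_compositumMap_le H H' hij.le)
  have hsurj := AlgHom.pi_surjective_of_injective_ker (A := fixedField H' ⊗[K] fixedField H)
    _ (fun i => compositumMap_surjective _ _ (σ i)) hker
  have hfinrank : Module.finrank K (fixedField H' ⊗[K] fixedField H) =
      Module.finrank K (∀ i, ↥(fixedField H' ⊔ (fixedField H).map (σ i).toAlgHom)) := by
    rw [Module.finrank_tensorProduct, Module.finrank_pi_fintype, finrank_fixedField_eq_index,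
      finrank_fixedField_eq_index, H.index_eq_sum_relIndex_map_conj H' σ hσ, Finset.mul_sum]
    refine Finset.sum_congr rfl fun i _ => ?_
    rw [hcompositum i, finrank_fixedField_eq_index, ← Subgroup.relIndex_mul_index inf_le_left,
      Subgroup.inf_relIndex_left, mul_comm]
  have hinj := (LinearMap.injective_iff_surjective_of_finrank_eq_finrank
    (f := (AlgHom.pi fun i => compositumMap _ _ (σ i)).toLinearMap) hfinrank).mpr hsurj
  exact ⟨⟨_, fun x y i => compositumMap_tmul _ _ (σ i) x y, hinj, hsurj⟩, hcompositum⟩
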